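/- Let ν > 0 and define ρ_ν(t) = (1/t)·∫_0^∞ y^{1−ν}·e^{−(1+y²)/(2t)}·I_ν(y/t) dy for t > 0. Then lim_{t→∞} t^ν·ρ_ν(t) = 1/(2^ν·Γ(1+ν)), i.e. ρ_ν(t) ∼ 1/(t^ν·2^ν·Γ(1+ν)) as t → ∞. -/

import Mathlib

/-!
Expanding `I_ν` in its power series and integrating term by term against `y ^ (1 - ν) * e^{-b y²}`
turns every term into a Gaussian moment `∫ y^{2j+1} e^{-b y²} = j! / (2 b^{j+1})`, so that
`t^ν ρ_ν(t) = e^{-1/(2t)} 2^{-ν} E_{1,ν+1}(1/(2t))` with the Mittag-Leffler function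
`E_{1,β}(x) = Σ x^j / Γ(β + j)`. Since `Γ(β + j) ≥ j! Γ(β)` for `β ≥ 1`, this series is dominated
by the exponential series, hence `E_{1,β}` is continuous with `E_{1,β}(0) = 1 / Γ(β)`, and the
limit follows by letting `t → ∞`.
-/

open MeasureTheory Real Filter Set Topology

/-- The modified Bessel function of the first kind, defined by its series:
`I_ν(y) = Σ_{j=0}^∞ (y/2)^{ν+2j} / (j!·Γ(ν+j+1))`. -/
noncomputable def besselI (ν y : ℝ) : ℝ :=
  ∑' j : ℕ, (y / 2) ^ (ν + 2 * (j : ℝ)) / ((Nat.factorial j : ℝ) * Real.Gamma (ν + (j : ℝ) + 1))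

/-- The explicit integral formula for the Bessel(δ) call price, `δ = 2ν+2`, strike `K = k^{−2ν}`:
`r_{ν,k}(t) = ν·k^{−ν}·∫_0^{k/t} y^{−1}·e^{−y/(2k)}·[ y^ν/(2^ν Γ(1+ν)) − e^{−ky/2}·I_ν(y) ] dy`. -/
noncomputable def rBes (ν k t : ℝ) : ℝ :=
  ν * k ^ (-ν) *
    ∫ y in (0:ℝ)..(k / t),
      y⁻¹ * Real.exp (-y / (2 * k)) *
        (y ^ ν / ((2:ℝ) ^ ν * Real.Gamma (1 + ν)) - Real.exp (-(k * y) / 2) * besselI ν y)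

/-- `ρ_ν(t) = (1/t)·∫_0^∞ y^{1−ν}·e^{−(1+y²)/(2t)}·I_ν(y/t) dy`, the expectation
`E_1^{(δ)}[R_t^{−(δ−2)}]` for the Bessel(δ) process started at 1, δ = 2ν+2. -/
noncomputable def rhoNu (ν t : ℝ) : ℝ :=
  (1 / t) *
    ∫ y in Set.Ioi (0:ℝ), y ^ (1 - ν) * Real.exp (-(1 + y ^ 2) / (2 * t)) * besselI ν (y / t)

open scoped Nat

noncomputable def mittagLeffler (β x : ℝ) : ℝ :=
  ∑' j : ℕ, x ^ j / Gamma (β + j)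

lemma factorial_mul_Gamma_le_Gamma_add_nat {β : ℝ} (hβ : 1 ≤ β) (j : ℕ) :
    (j ! : ℝ) * Gamma β ≤ Gamma (β + j) := by
  induction j with
  | zero => simp
  | succ j ih =>
    have hβj : 0 < β + j := by positivity
    rw [Nat.factorial_succ, Nat.cast_mul, Nat.cast_succ, ← add_assoc, Gamma_add_one hβj.ne',
      mul_assoc]
    exact mul_le_mul (by linarith) ih (by positivity) hβj.le

lemma norm_pow_div_Gamma_le {β : ℝ} (hβ : 1 ≤ β) (x : ℝ) (j : ℕ) :
    ‖x ^ j / Gamma (β + j)‖ ≤ ‖x‖ ^ j / j ! / Gamma β := by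
  have hle := factorial_mul_Gamma_le_Gamma_add_nat hβ j
  have hpos : 0 < (j ! : ℝ) * Gamma β := mul_pos (by positivity) (Gamma_pos_of_pos (by linarith))
  rw [norm_div, norm_pow, div_div, Real.norm_of_nonneg (hpos.trans_le hle).le]
  exact div_le_div_of_nonneg_left (by positivity) hpos hle

lemma summable_pow_div_Gamma {β : ℝ} (hβ : 1 ≤ β) (x : ℝ) :
    Summable fun j : ℕ => x ^ j / Gamma (β + j) :=
  Summable.of_norm_bounded ((Real.summable_pow_div_factorial ‖x‖).div_const _)
    (norm_pow_div_Gamma_le hβ x)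

lemma mittagLeffler_zero (β : ℝ) : mittagLeffler β 0 = (Gamma β)⁻¹ := by
  rw [mittagLeffler, tsum_eq_single 0 fun j hj => by simp [hj]]
  simp

lemma continuous_mittagLeffler {β : ℝ} (hβ : 1 ≤ β) : Continuous (mittagLeffler β) := by
  refine continuous_iff_continuousAt.2 fun x₀ => ?_
  have hΓ : 0 < Gamma β := Gamma_pos_of_pos (by linarith)
  have hball : ContinuousOn (mittagLeffler β) (Metric.ball 0 (‖x₀‖ + 1)) :=
    continuousOn_tsum (fun j => ((continuous_pow j).div_const _).continuousOn)
      ((Real.summable_pow_div_factorial (‖x₀‖ + 1)).div_const (Gamma β)) fun j x hx =>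
        (norm_pow_div_Gamma_le hβ x j).trans <| by
          rw [mem_ball_zero_iff] at hx
          gcongr
  exact hball.continuousAt (Metric.isOpen_ball.mem_nhds (by simp))

lemma integrableOn_pow_mul_exp_neg_mul_sq {b : ℝ} (hb : 0 < b) (n : ℕ) :
    IntegrableOn (fun y : ℝ => y ^ n * exp (-b * y ^ 2)) (Ioi 0) := by
  simpa only [rpow_natCast] using
    integrableOn_rpow_mul_exp_neg_mul_sq hb (s := n) (neg_one_lt_zero.trans_le n.cast_nonneg)

lemma integral_pow_odd_mul_exp_neg_mul_sq {b : ℝ} (hb : 0 < b) (n : ℕ) :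
    ∫ y in Ioi (0:ℝ), y ^ (2 * n + 1) * exp (-b * y ^ 2) = n ! / (2 * b ^ (n + 1)) := by
  have h := integral_rpow_mul_exp_neg_mul_rpow two_pos
    (neg_one_lt_zero.trans_le (2 * n + 1).cast_nonneg) hb
  simp only [rpow_natCast, rpow_two] at h
  rw [h, show (-(((2 * n + 1 : ℕ) : ℝ) + 1) / 2) = -((n + 1 : ℕ) : ℝ) by push_cast; ring,
    show ((((2 * n + 1 : ℕ) : ℝ) + 1) / 2) = n + 1 by push_cast; ring,
    Gamma_nat_eq_factorial, rpow_neg hb.le, rpow_natCast]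
  ring

lemma rpow_one_sub_mul_besselI {ν a y : ℝ} (ha : 0 ≤ a) (hy : 0 < y) :
    y ^ (1 - ν) * besselI ν (a * y) =
      ∑' j : ℕ, (a / 2) ^ (ν + 2 * j) / (j ! * Gamma (ν + j + 1)) * y ^ (2 * j + 1) := by
  rw [besselI, ← tsum_mul_left]
  refine tsum_congr fun j => ?_
  have hpow : y ^ (1 - ν) * y ^ (ν + 2 * (j : ℝ)) = y ^ (2 * j + 1) := by
    rw [← rpow_add hy, ← rpow_natCast]
    push_cast
    ring_nf
  rw [mul_div_right_comm, mul_rpow (by positivity) hy.le, ← hpow]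
  ring

lemma integral_besselI_term_mul_exp_neg_mul_sq {ν a b : ℝ} (ha : 0 < a) (hb : 0 < b) (j : ℕ) :
    ∫ y in Ioi (0:ℝ), (a / 2) ^ (ν + 2 * j) / (j ! * Gamma (ν + j + 1)) *
        (y ^ (2 * j + 1) * exp (-b * y ^ 2)) =
      (a / 2) ^ ν / (2 * b) * (((a / 2) ^ 2 / b) ^ j / Gamma (ν + 1 + j)) := by
  have hpow : (a / 2) ^ (ν + 2 * (j : ℝ)) = (a / 2) ^ ν * ((a / 2) ^ 2) ^ j := by
    rw [rpow_add (by positivity), ← pow_mul, ← rpow_natCast]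
    push_cast
    rfl
  rw [integral_const_mul, integral_pow_odd_mul_exp_neg_mul_sq hb, hpow, add_right_comm ν,
    div_pow _ b j, pow_succ b j]
  field_simp

theorem integral_rpow_mul_exp_neg_mul_sq_mul_besselI {ν a b : ℝ} (hν : 0 ≤ ν) (ha : 0 < a)
    (hb : 0 < b) :
    ∫ y in Ioi (0:ℝ), y ^ (1 - ν) * exp (-b * y ^ 2) * besselI ν (a * y) =
      (a / 2) ^ ν / (2 * b) * mittagLeffler (ν + 1) ((a / 2) ^ 2 / b) := by
  set F : ℕ → ℝ → ℝ := fun j y =>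
    (a / 2) ^ (ν + 2 * j) / (j ! * Gamma (ν + j + 1)) * (y ^ (2 * j + 1) * exp (-b * y ^ 2))
    with hF
  have hF_nonneg (j : ℕ) {y : ℝ} (hy : y ∈ Ioi 0) : 0 ≤ F j y := by
    have : 0 < y := hy
    have : 0 < Gamma (ν + j + 1) := Gamma_pos_of_pos (by positivity)
    positivity
  have hF_int (j : ℕ) : IntegrableOn (F j) (Ioi 0) :=
    (integrableOn_pow_mul_exp_neg_mul_sq hb _).const_mul _
  have hsum : Summable fun j => ∫ y in Ioi (0:ℝ), ‖F j y‖ := by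
    refine ((summable_pow_div_Gamma (β := ν + 1) (by linarith) ((a / 2) ^ 2 / b)).mul_left
      ((a / 2) ^ ν / (2 * b))).congr fun j => ?_
    rw [← integral_besselI_term_mul_exp_neg_mul_sq ha hb]
    exact setIntegral_congr_fun measurableSet_Ioi fun y hy =>
      (norm_of_nonneg (hF_nonneg j hy)).symm
  calc ∫ y in Ioi (0:ℝ), y ^ (1 - ν) * exp (-b * y ^ 2) * besselI ν (a * y)
      = ∫ y in Ioi (0:ℝ), ∑' j, F j y := by
        refine setIntegral_congr_fun measurableSet_Ioi fun y hy => ?_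
        rw [mul_right_comm, rpow_one_sub_mul_besselI ha.le hy, ← tsum_mul_right]
        simp only [hF, mul_assoc]
    _ = ∑' j, ∫ y in Ioi (0:ℝ), F j y :=
        (integral_tsum_of_summable_integral_norm hF_int hsum).symm
    _ = (a / 2) ^ ν / (2 * b) * mittagLeffler (ν + 1) ((a / 2) ^ 2 / b) := by
        simp only [hF, integral_besselI_term_mul_exp_neg_mul_sq ha hb, tsum_mul_left,
          mittagLeffler]

lemma rpow_mul_rhoNu {ν t : ℝ} (hν : 0 ≤ ν) (ht : 0 < t) :
    t ^ ν * rhoNu ν t = exp (-(2 * t)⁻¹) * (1 / 2) ^ ν * mittagLeffler (ν + 1) (2 * t)⁻¹ := by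
  have hintegrand (y : ℝ) :
      y ^ (1 - ν) * exp (-(1 + y ^ 2) / (2 * t)) * besselI ν (y / t) =
        exp (-(2 * t)⁻¹) * (y ^ (1 - ν) * exp (-(2 * t)⁻¹ * y ^ 2) * besselI ν (t⁻¹ * y)) := by
    rw [div_eq_inv_mul y t, show -(1 + y ^ 2) / (2 * t) = -(2 * t)⁻¹ + -(2 * t)⁻¹ * y ^ 2 by ring,
      exp_add]
    ring
  have harg : (t⁻¹ / 2) ^ 2 / (2 * t)⁻¹ = (2 * t)⁻¹ := by field_simp
  have hscale : t ^ ν * (t⁻¹ / 2) ^ ν = (1 / 2) ^ ν := by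
    rw [← mul_rpow ht.le (by positivity)]
    field_simp
  rw [rhoNu, setIntegral_congr_fun measurableSet_Ioi fun y _ => hintegrand y, integral_const_mul,
    integral_rpow_mul_exp_neg_mul_sq_mul_besselI hν (inv_pos.2 ht) (by positivity), harg,
    ← hscale]
  field_simp

theorem stmt_11 (ν : ℝ) (hν : 0 < ν) :
    Filter.Tendsto (fun t : ℝ => t ^ ν * rhoNu ν t) Filter.atTop
      (nhds (1 / ((2:ℝ) ^ ν * Real.Gamma (1 + ν)))) := by
  have hx : Tendsto (fun t : ℝ => (2 * t)⁻¹) atTop (𝓝 0) :=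
    tendsto_inv_atTop_zero.comp (tendsto_id.const_mul_atTop two_pos)
  have hexp : Tendsto (fun t : ℝ => exp (-(2 * t)⁻¹)) atTop (𝓝 1) := by
    rw [← exp_zero, ← neg_zero]
    exact (continuous_exp.tendsto _).comp hx.neg
  have hE :
      Tendsto (fun t : ℝ => mittagLeffler (ν + 1) (2 * t)⁻¹) atTop (𝓝 (Gamma (ν + 1))⁻¹) := by
    rw [← mittagLeffler_zero]
    exact ((continuous_mittagLeffler (by linarith)).tendsto 0).comp hx
  have hlim := (hexp.mul_const ((1 / 2 : ℝ) ^ ν)).mul hE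
  have hval : 1 * (1 / 2 : ℝ) ^ ν * (Gamma (ν + 1))⁻¹ = 1 / (2 ^ ν * Gamma (1 + ν)) := by
    rw [div_rpow zero_le_one zero_le_two, one_rpow, add_comm ν]
    field_simp
  rw [← hval]
  refine hlim.congr' ?_
  filter_upwards [eventually_gt_atTop 0] with t ht
  exact (rpow_mul_rhoNu hν.le ht).symm
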